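/- Let w̃ ∈ H¹₀(S_R) be a minimizer of E over W_P satisfying the variational inequality E'_{w̃}(u - w̃) ≥ -λ·N(u - w̃) for all admissible u, where E'_{w̃}(σ) = ∫ (e^s ∇w̃·∇σ - K e^{-s} w̃^q σ) and N(σ) = ∫ f σ. If I_P = E(w̃) < 0 and q > 1, then λ > 0. -/

import Mathlib

open MeasureTheory Real

theorem stmt_16 (q K lam P IP R : ℝ) (hq : 1 < q) (hK : 0 < K) (hP : 0 < P) (hR : 0 < R)
    (s f w : EuclideanSpace ℝ (Fin 3) → ℝ)
    (hw : ∀ x, 0 ≤ w x)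
    (hgradint : IntegrableOn (fun x => exp (s x) * ‖gradient w x‖ ^ 2)
      (Metric.ball 0 R))
    (hpowint : IntegrableOn (fun x => exp (-s x) * (w x) ^ (q + 1))
      (Metric.ball 0 R))
    (hN : (∫ x in Metric.ball 0 R, f x * w x) = P)
    (hIP : IP = ∫ x in Metric.ball 0 R,
      (exp (s x) / 2 * ‖gradient w x‖ ^ 2 - K / (q + 1) * exp (-s x) * (w x) ^ (q + 1)))
    (hIPneg : IP < 0)
    (hvar : ∀ u : EuclideanSpace ℝ (Fin 3) → ℝ, (∀ x, 0 ≤ u x) →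
      (∫ x in Metric.ball 0 R,
        (exp (s x) * (inner ℝ (gradient w x) (gradient (u - w) x) : ℝ) -
          K * exp (-s x) * (w x) ^ q * (u x - w x))) ≥
        -lam * ∫ x in Metric.ball 0 R, f x * (u x - w x)) :
    0 < lam := by
  have hq1 : (0:ℝ) < q + 1 := by linarith
  have hvar2 := hvar (fun x => 2 * w x) (fun x => by have := hw x; positivity)
  have hfun : (fun x => 2 * w x) - w = w := by funext x; simp [Pi.sub_apply]; ring
  rw [hfun] at hvar2
  set a := ∫ x in Metric.ball (0 : EuclideanSpace ℝ (Fin 3)) R,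
      exp (s x) * ‖gradient w x‖ ^ 2 with ha
  set b := ∫ x in Metric.ball (0 : EuclideanSpace ℝ (Fin 3)) R,
      exp (-s x) * (w x) ^ (q + 1) with hb
  -- pointwise identity for the LHS integrand
  have hpt : ∀ x, exp (s x) * (inner ℝ (gradient w x) (gradient w x) : ℝ) -
      K * exp (-s x) * (w x) ^ q * (2 * w x - w x)
      = exp (s x) * ‖gradient w x‖ ^ 2 - K * (exp (-s x) * (w x) ^ (q + 1)) := by
    intro x
    rw [real_inner_self_eq_norm_sq]
    rcases eq_or_lt_of_le (hw x) with h | h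
    · rw [← h]
      rw [Real.zero_rpow (by linarith : q ≠ 0), Real.zero_rpow (by linarith : q + 1 ≠ 0)]
      ring
    · rw [Real.rpow_add_one (ne_of_gt h)]; ring
  have hLHS : (∫ x in Metric.ball (0 : EuclideanSpace ℝ (Fin 3)) R,
      (exp (s x) * (inner ℝ (gradient w x) (gradient w x) : ℝ) -
        K * exp (-s x) * (w x) ^ q * (2 * w x - w x)))
      = a - K * b := by
    rw [show (fun x => exp (s x) * (inner ℝ (gradient w x) (gradient w x) : ℝ) -
        K * exp (-s x) * (w x) ^ q * (2 * w x - w x))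
        = fun x => exp (s x) * ‖gradient w x‖ ^ 2 - K * (exp (-s x) * (w x) ^ (q + 1))
      from funext hpt]
    rw [integral_sub hgradint (hpowint.const_mul K), integral_const_mul]
  have hRHS : (∫ x in Metric.ball (0 : EuclideanSpace ℝ (Fin 3)) R,
      f x * (2 * w x - w x)) = P := by
    rw [show (fun x => f x * (2 * w x - w x)) = fun x => f x * w x from by
      funext x; ring]
    exact hN
  rw [hLHS, hRHS] at hvar2
  -- split IP
  have hIP2 : IP = (1/2) * a - (K / (q + 1)) * b := by
    rw [hIP, show (fun x => exp (s x) / 2 * ‖gradient w x‖ ^ 2 -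
        K / (q + 1) * exp (-s x) * (w x) ^ (q + 1))
        = fun x => (1/2) * (exp (s x) * ‖gradient w x‖ ^ 2) -
          (K / (q + 1)) * (exp (-s x) * (w x) ^ (q + 1)) from by funext x; ring]
    rw [integral_sub (hgradint.const_mul _) (hpowint.const_mul _),
      integral_const_mul, integral_const_mul]
  have hbnn : 0 ≤ b := by
    apply setIntegral_nonneg measurableSet_ball
    intro x _
    have := hw x
    positivity
  have hKeq : K = (K / (q + 1)) * (q + 1) := by field_simp
  have hc : 0 < K / (q + 1) := div_pos hK hq1
  have hneg : a - K * b < 0 := by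
    rw [hIP2] at hIPneg
    nlinarith [mul_nonneg (mul_nonneg hc.le hbnn) (by linarith : (0:ℝ) ≤ q - 1)]
  by_contra h
  push_neg at h
  nlinarith [mul_nonneg (neg_nonneg.2 h) hP.le]
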